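/- The measure μ with density x ↦ 2/(log(2+√3)·(1−(2−√3)x)(1+√3x)) with respect to Lebesgue measure on (0,1) is a probability measure, and it is invariant under the spliced continued fraction map T: for every Borel set E ⊆ [0,1], μ(T^{-1}E) = μ(E). -/

import Mathlib

open MeasureTheory Real Set Filter Topology

namespace SCF

/-- The involution `ι(x) = (1−x)/(1+x)`. -/
noncomputable def iota (x : ℝ) : ℝ := (1 - x) / (1 + x)

/-- Even continued-fraction step.  For `y ∈ (0,1/2]` one has
`⌊(1/y+1)/2⌋ = k` whenever `1/y ∈ (2k−1, 2k+1)`, so `Te y = |1/y − 2k|`;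
explicitly `Te y = 1/y − 2` on `[1/3,1/2]`, `Te y = 1/y − 2k` on
`[1/(2k+1), 1/(2k))` and `Te y = 2k − 1/y` on `[1/(2k), 1/(2k−1))` (`k ≥ 2`). -/
noncomputable def Te (y : ℝ) : ℝ := |1 / y - 2 * (⌊(1 / y + 1) / 2⌋ : ℝ)|

/-- The spliced continued fraction (SCF) map `T : [0,1] → [0,1]`, with
`T 0 = 0`, `T 1 = 1`.  On `(0,1/2]` it is the even continued fraction map
(see `Te`), and on `(1/2,1)` it is the odd–odd map, which is the conjugate
`ι ∘ Te ∘ ι` of the even map; this agrees with the branchwise definition: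
`T x = (k x − (k−1))/(k − (k+1) x)` on `((k−1)/k, (2k−1)/(2k+1)]` and
`T x = (k − (k+1) x)/(k x − (k−1))` on `((2k−1)/(2k+1), k/(k+1)]` for `k ≥ 2`. -/
noncomputable def T (x : ℝ) : ℝ :=
  if x ≤ 0 then 0
  else if 1 ≤ x then 1
  else if x ≤ 1 / 2 then Te x
  else iota (Te (iota x))

/-- Parity label of a digit: `e` (even cusp) or `o` (odd–odd cusp). -/
inductive Par | e | o
deriving DecidableEq

/-- A candidate SCF digit `(a, ε)_s`. -/
structure Digit where
  a : ℤ
  eps : ℤ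
  s : Par
deriving DecidableEq

/-- The digit set `𝒜 = {(k,ε)_s : k ≥ 2, ε = ±1, s ∈ {e,o}} ∪ {(1,+1)_e}`. -/
def Digit.Valid (d : Digit) : Prop :=
  (2 ≤ d.a ∧ (d.eps = 1 ∨ d.eps = -1)) ∨ (d.a = 1 ∧ d.eps = 1 ∧ d.s = Par.e)

/-- The branch intervals `I_{(a,ε)_s}` of the SCF map. -/
noncomputable def branch (d : Digit) : Set ℝ :=
  match d.s with
  | Par.e =>
      if d.a = 1 then Set.Icc (1/3 : ℝ) (1/2)
      else if d.eps = 1 then Set.Ico (1 / (2 * (d.a : ℝ) + 1)) (1 / (2 * (d.a : ℝ)))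
      else Set.Ico (1 / (2 * (d.a : ℝ))) (1 / (2 * (d.a : ℝ) - 1))
  | Par.o =>
      if d.eps = 1 then
        Set.Ioc ((2 * (d.a : ℝ) - 1) / (2 * (d.a : ℝ) + 1)) ((d.a : ℝ) / ((d.a : ℝ) + 1))
      else
        Set.Ioc (((d.a : ℝ) - 1) / (d.a : ℝ)) ((2 * (d.a : ℝ) - 1) / (2 * (d.a : ℝ) + 1))

open Classical in
/-- The SCF digit of a point `y` (the unique valid digit `d` with `y ∈ I_d`;
well defined for every `y ∈ (0,1)`). -/
noncomputable def digit (y : ℝ) : Digit :=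
  if h : ∃ d : Digit, d.Valid ∧ y ∈ branch d then h.choose else ⟨1, 1, Par.e⟩

/-- The `n`-th SCF digit `(a_n(x), ε_n(x))_{s_n(x)}` of `x`, `n ≥ 1`,
determined by `T^[n−1] x ∈ I_{(a_n,ε_n)_{s_n}}`. -/
noncomputable def dig (n : ℕ) (x : ℝ) : Digit := digit (T^[n - 1] x)

/-- The `n`-th SCF partial quotient `a_n(x)`. -/
noncomputable def a (n : ℕ) (x : ℝ) : ℤ := (dig n x).a

/-- The invariant density `f_μ`. -/
noncomputable def fdens (x : ℝ) : ℝ :=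
  2 / (Real.log (2 + Real.sqrt 3) * (1 - (2 - Real.sqrt 3) * x) * (1 + Real.sqrt 3 * x))

/-- The absolutely continuous `T`-invariant probability measure `μ` on `(0,1)`. -/
noncomputable def mu : Measure ℝ :=
  (volume.restrict (Set.Ioo (0 : ℝ) 1)).withDensity fun x => ENNReal.ofReal (fdens x)

/-- The inverse branches `h_{(a,ε)_s}` of the SCF map `T`. -/
noncomputable def h (d : Digit) (x : ℝ) : ℝ :=
  match d.s with
  | Par.e => 1 / (2 * (d.a : ℝ) + (d.eps : ℝ) * x)
  | Par.o =>
      if d.eps = 1 then (((d.a : ℝ) - 1) * x + (d.a : ℝ)) / ((d.a : ℝ) * x + ((d.a : ℝ) + 1))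
      else ((d.a : ℝ) * x + ((d.a : ℝ) - 1)) / (((d.a : ℝ) + 1) * x + (d.a : ℝ))

/-- Composed inverse branch `h_{A^{(n)}} = h_{A₁} ∘ ⋯ ∘ h_{A_n}` of a word. -/
noncomputable def hWord (l : List Digit) : ℝ → ℝ :=
  l.foldr (fun d g => h d ∘ g) id

/-- The dual inverse branches `bar h_{(b,η)_t}`. -/
noncomputable def hbar (d : Digit) (y : ℝ) : ℝ :=
  match d.s with
  | Par.e => (d.eps : ℝ) / (2 * (d.a : ℝ) + y)
  | Par.o =>
      1 / (1 + (d.eps : ℝ) / (((d.a : ℝ) - ((max 0 d.eps : ℤ) : ℝ)) + 1 / (1 + y)))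

/-- The matrix `M_{(a,ε)_s}` associated with the inverse branch `h_{(a,ε)_s}`. -/
noncomputable def Mdig (d : Digit) : Matrix (Fin 2) (Fin 2) ℝ :=
  match d.s with
  | Par.e => !![0, 1; (d.eps : ℝ), 2 * (d.a : ℝ)]
  | Par.o =>
      !![(d.a : ℝ) - ((max 0 d.eps : ℤ) : ℝ), (d.a : ℝ) - ((max 0 d.eps : ℤ) : ℝ) + (d.eps : ℝ);
         (d.a : ℝ) - ((max 0 d.eps : ℤ) : ℝ) + 1, (d.a : ℝ) - ((max 0 d.eps : ℤ) : ℝ) + (d.eps : ℝ) + 1]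

/-- `M_n(x) = M_{(a₁,ε₁)_{s₁}} ⋯ M_{(a_n,ε_n)_{s_n}}`. -/
noncomputable def Mn (n : ℕ) (x : ℝ) : Matrix (Fin 2) (Fin 2) ℝ :=
  ((List.range n).map fun i => Mdig (digit (T^[i] x))).prod

/-- `P_n(x)`: the `(1,2)`-entry of `M_n(x)` (numerator of the `n`-th convergent). -/
noncomputable def Pc (n : ℕ) (x : ℝ) : ℝ := Mn n x 0 1

/-- `Q_n(x)`: the `(2,2)`-entry of `M_n(x)` (denominator of the `n`-th convergent). -/
noncomputable def Qc (n : ℕ) (x : ℝ) : ℝ := Mn n x 1 1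


/-!
The measure `mu` has distribution function
`muCdf x = (log (1 + √3 x) - log (1 - (2 - √3) x)) / log (2 + √3)` on `[0, 1]`, so it suffices
to show `mu (T⁻¹' [0, t]) = muCdf t` for `0 ≤ t < 1`. The involution `ι x = (1 - x) / (1 + x)`
satisfies `muCdf ∘ ι = 1 - muCdf`, so it preserves `mu`; it also conjugates the odd branch of `T`
on `(1/2, 1)` to the even map `Te` on `(0, 1/3)`, with `[0, t]` turned into `[ι t, 1]`. So only
the even map has to be understood. On the cell `1/y ∈ [2k+3, 2k+5)` it is `|1/y - (2k+4)|`,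
hence `{Te ≤ r}` meets the cell in the interval `1/y ∈ [2k+4-r, 2k+4+r]`, whose masses telescope
to `(log (2 + r + √3) - log (2 - r + √3)) / log (2 + √3)`. Adding up the three pieces
`(0, 1/3]`, `(1/3, 1/2]`, `(1/2, 1)` of `T⁻¹' [0, t]` leaves an identity between logarithms.
-/

lemma one_lt_sqrt_three : 1 < √3 := (Real.lt_sqrt zero_le_one).2 (by norm_num)

lemma sqrt_three_lt_two : √3 < 2 := (Real.sqrt_lt' two_pos).2 (by norm_num)

lemma log_two_add_sqrt_three_pos : 0 < log (2 + √3) :=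
  Real.log_pos (by linarith [one_lt_sqrt_three])

lemma log_one_add_sqrt_three_sub_log_sqrt_three_sub_one :
    log (1 + √3) - log (√3 - 1) = log (2 + √3) := by
  have h := one_lt_sqrt_three
  rw [← Real.log_div (by linarith) (by linarith)]
  congr 1
  rw [div_eq_iff (by linarith)]
  nlinarith [Real.sq_sqrt (show (0 : ℝ) ≤ 3 by norm_num)]

noncomputable def muCdf (x : ℝ) : ℝ :=
  (log (1 + √3 * x) - log (1 - (2 - √3) * x)) / log (2 + √3)

lemma fdens_factors_pos {x : ℝ} (h0 : 0 ≤ x) (h1 : x ≤ 1) :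
    0 < 1 + √3 * x ∧ 0 < 1 - (2 - √3) * x := by
  have := one_lt_sqrt_three; have := sqrt_three_lt_two
  constructor <;> nlinarith

lemma fdens_pos {x : ℝ} (h0 : 0 ≤ x) (h1 : x ≤ 1) : 0 < fdens x := by
  obtain ⟨h₁, h₂⟩ := fdens_factors_pos h0 h1
  unfold fdens
  have := log_two_add_sqrt_three_pos
  positivity

lemma continuousOn_fdens : ContinuousOn fdens (Icc 0 1) := by
  refine continuousOn_const.div (by fun_prop) fun x hx => ?_
  obtain ⟨h₁, h₂⟩ := fdens_factors_pos hx.1 hx.2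
  have := log_two_add_sqrt_three_pos
  positivity

lemma hasDerivAt_muCdf {x : ℝ} (h0 : 0 ≤ x) (h1 : x ≤ 1) : HasDerivAt muCdf (fdens x) x := by
  obtain ⟨h₁, h₂⟩ := fdens_factors_pos h0 h1
  have hL := log_two_add_sqrt_three_pos
  have d₁ : HasDerivAt (fun x => 1 + √3 * x) (√3) x := by
    simpa using ((hasDerivAt_id x).const_mul (√3)).const_add 1
  have d₂ : HasDerivAt (fun x => 1 - (2 - √3) * x) (-(2 - √3)) x := by
    simpa using ((hasDerivAt_id x).const_mul (2 - √3)).const_sub 1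
  refine (((d₁.log h₁.ne').sub (d₂.log h₂.ne')).div_const _).congr_deriv ?_
  rw [fdens, div_sub_div _ _ h₁.ne' h₂.ne', div_div,
    div_eq_div_iff (by positivity) (by positivity)]
  ring

lemma muCdf_zero : muCdf 0 = 0 := by simp [muCdf]

lemma muCdf_one : muCdf 1 = 1 := by
  rw [muCdf, mul_one, mul_one, show 1 - (2 - √3) = √3 - 1 by ring,
    log_one_add_sqrt_three_sub_log_sqrt_three_sub_one, div_self log_two_add_sqrt_three_pos.ne']

lemma muCdf_le_muCdf {a b : ℝ} (h0 : 0 ≤ a) (hab : a ≤ b) (h1 : b ≤ 1) :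
    muCdf a ≤ muCdf b := by
  obtain ⟨ha, -⟩ := fdens_factors_pos h0 (hab.trans h1)
  obtain ⟨-, hb⟩ := fdens_factors_pos (h0.trans hab) h1
  have := sqrt_three_lt_two
  refine div_le_div_of_nonneg_right (sub_le_sub ?_ ?_) log_two_add_sqrt_three_pos.le
  · exact Real.log_le_log ha (by gcongr)
  · exact Real.log_le_log hb (by gcongr)

lemma muCdf_one_div {v : ℝ} (hv : 1 ≤ v) :
    muCdf (1 / v) = (log (v + √3) - log (v - 2 + √3)) / log (2 + √3) := by
  have := one_lt_sqrt_three
  rw [muCdf, show 1 + √3 * (1 / v) = (v + √3) / v by field_simp,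
    show 1 - (2 - √3) * (1 / v) = (v - 2 + √3) / v by field_simp; ring,
    Real.log_div (by linarith) (by linarith), Real.log_div (by linarith) (by linarith)]
  ring

lemma muCdf_iota {x : ℝ} (h0 : 0 ≤ x) (h1 : x ≤ 1) : muCdf (iota x) = 1 - muCdf x := by
  obtain ⟨h₁, h₂⟩ := fdens_factors_pos h0 h1
  have := one_lt_sqrt_three
  have hL := log_two_add_sqrt_three_pos
  have hs := Real.sq_sqrt (show (0 : ℝ) ≤ 3 by norm_num)
  rw [muCdf, muCdf, iota,
    show 1 + √3 * ((1 - x) / (1 + x)) = (1 + √3) * (1 - (2 - √3) * x) / (1 + x) by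
      field_simp; linear_combination (-x) * hs,
    show 1 - (2 - √3) * ((1 - x) / (1 + x)) = (√3 - 1) * (1 + √3 * x) / (1 + x) by
      field_simp; linear_combination (-x) * hs,
    Real.log_div (by positivity) (by linarith), Real.log_div (by nlinarith) (by linarith),
    Real.log_mul (by positivity) h₂.ne', Real.log_mul (by linarith) h₁.ne', eq_sub_iff_add_eq,
    ← add_div, div_eq_one_iff_eq hL.ne', ← log_one_add_sqrt_three_sub_log_sqrt_three_sub_one]
  ring

lemma mu_apply' (A : Set ℝ) : mu A = ∫⁻ x in A ∩ Ioo 0 1, ENNReal.ofReal (fdens x) := by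
  rw [mu, withDensity_apply', Measure.restrict_restrict' measurableSet_Ioo]

lemma mu_inter_Ioo (A : Set ℝ) : mu (A ∩ Ioo 0 1) = mu A := by
  rw [mu_apply', mu_apply', inter_assoc, inter_self]

lemma mu_Ioo {a b : ℝ} (h0 : 0 ≤ a) (hab : a ≤ b) (h1 : b ≤ 1) :
    mu (Ioo a b) = ENNReal.ofReal (muCdf b - muCdf a) := by
  have hsub : Icc a b ⊆ Icc 0 1 := Icc_subset_Icc h0 h1
  have hint : IntegrableOn fdens (Ioo a b) :=
    ((continuousOn_fdens.mono hsub).integrableOn_Icc).mono_set Ioo_subset_Icc_self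
  rw [← mu_inter_Ioo, mu_apply', inter_assoc, inter_self,
    inter_eq_left.2 (Ioo_subset_Ioo h0 h1), ← ofReal_integral_eq_lintegral_ofReal hint
      ((ae_restrict_mem measurableSet_Ioo).mono fun x hx =>
        (fdens_pos (h0.trans hx.1.le) (hx.2.le.trans h1)).le),
    ← integral_Ioc_eq_integral_Ioo, ← intervalIntegral.integral_of_le hab,
    intervalIntegral.integral_eq_sub_of_hasDerivAt]
  · intro x hx
    rw [uIcc_of_le hab] at hx
    exact hasDerivAt_muCdf (hsub hx).1 (hsub hx).2
  · exact (continuousOn_fdens.mono (uIcc_of_le hab ▸ hsub)).intervalIntegrable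

instance : NullSingletonClass mu := by
  unfold mu; infer_instance

lemma mu_eq_of_Ioo_subset_of_subset_Icc {a b : ℝ} {S : Set ℝ} (h0 : 0 ≤ a) (hab : a ≤ b)
    (h1 : b ≤ 1) (hIoo : Ioo a b ⊆ S) (hIcc : S ⊆ Icc a b) :
    mu S = ENNReal.ofReal (muCdf b - muCdf a) := by
  refine le_antisymm ?_ (mu_Ioo h0 hab h1 ▸ measure_mono hIoo)
  rw [← mu_Ioo h0 hab h1, measure_congr (Ioo_ae_eq_Icc (μ := mu))]
  exact measure_mono hIcc

instance : IsProbabilityMeasure mu where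
  measure_univ := by
    rw [← mu_inter_Ioo, univ_inter, mu_Ioo le_rfl zero_le_one le_rfl, muCdf_one, muCdf_zero]
    norm_num

lemma mu_Iic {t : ℝ} (h0 : 0 ≤ t) (h1 : t < 1) : mu (Iic t) = ENNReal.ofReal (muCdf t) := by
  have h := mu_eq_of_Ioo_subset_of_subset_Icc (S := Iic t ∩ Ioo 0 1) le_rfl h0 h1.le
    (fun x hx => ⟨hx.2.le, hx.1, hx.2.trans h1⟩) fun x hx => ⟨hx.2.1.le, hx.1⟩
  rwa [mu_inter_Ioo, muCdf_zero, sub_zero] at h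

lemma map_eq_mu {g : ℝ → ℝ} (hg : Measurable g) (hmaps : MapsTo g (Ioo 0 1) (Icc 0 1))
    (hcdf : ∀ t, 0 ≤ t → t < 1 → mu (g ⁻¹' Iic t) = ENNReal.ofReal (muCdf t)) :
    mu.map g = mu := by
  refine Measure.ext_of_Iic _ _ fun t => ?_
  rw [Measure.map_apply hg measurableSet_Iic]
  rcases lt_or_ge t 0 with ht0 | ht0
  · rw [← mu_inter_Ioo, ← mu_inter_Ioo (Iic t)]
    have hg : g ⁻¹' Iic t ∩ Ioo 0 1 = ∅ := eq_empty_of_forall_notMem fun x hx =>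
      absurd (hmaps hx.2).1 (not_le.2 (lt_of_le_of_lt hx.1 ht0))
    have hI : Iic t ∩ Ioo 0 1 = ∅ := eq_empty_of_forall_notMem fun x hx =>
      absurd hx.2.1 (not_lt.2 (le_trans hx.1 ht0.le))
    rw [hg, hI]
  rcases lt_or_ge t 1 with ht1 | ht1
  · rw [hcdf t ht0 ht1, mu_Iic ht0 ht1]
  · have hg : g ⁻¹' Iic t ∩ Ioo 0 1 = Ioo 0 1 :=
      inter_eq_right.2 fun x hx => (hmaps hx).2.trans ht1
    have hI : Iic t ∩ Ioo 0 1 = Ioo 0 1 := inter_eq_right.2 fun x hx => hx.2.le.trans ht1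
    rw [← mu_inter_Ioo, ← mu_inter_Ioo (Iic t), hg, hI]

lemma measurable_iota : Measurable iota := by
  unfold iota; fun_prop

lemma iota_mem_Icc {x : ℝ} (hx : x ∈ Icc (0 : ℝ) 1) : iota x ∈ Icc (0 : ℝ) 1 := by
  rw [iota]
  exact ⟨div_nonneg (by linarith [hx.2]) (by linarith [hx.1]),
    (div_le_one (by linarith [hx.1])).2 (by linarith [hx.1])⟩

lemma iota_le_iff {u t : ℝ} (hu : 0 ≤ u) (ht : 0 ≤ t) : iota u ≤ t ↔ iota t ≤ u := by
  rw [iota, iota, div_le_iff₀ (by linarith), div_le_iff₀ (by linarith)]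
  constructor <;> intro h <;> linarith

lemma iota_mem_Ioo_zero_third_iff {x : ℝ} (hx : 0 < x) :
    iota x ∈ Ioo 0 (1 / 3) ↔ x ∈ Ioo (1 / 2) 1 := by
  rw [iota, mem_Ioo, mem_Ioo, div_pos_iff_of_pos_right (by linarith),
    div_lt_div_iff₀ (by linarith) (by norm_num)]
  constructor <;> rintro ⟨h₁, h₂⟩ <;> constructor <;> linarith

lemma measurePreserving_iota : MeasurePreserving iota mu mu := by
  refine ⟨measurable_iota, map_eq_mu measurable_iota
    (fun x hx => iota_mem_Icc ⟨hx.1.le, hx.2.le⟩) fun t ht0 ht1 => ?_⟩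
  have hι := iota_mem_Icc ⟨ht0, ht1.le⟩
  have h := mu_eq_of_Ioo_subset_of_subset_Icc (S := iota ⁻¹' Iic t ∩ Ioo 0 1) hι.1 hι.2
    le_rfl (fun x hx => ⟨(iota_le_iff (hι.1.trans hx.1.le) ht0).2 hx.1.le,
      hι.1.trans_lt hx.1, hx.2⟩)
    fun x hx => ⟨(iota_le_iff hx.2.1.le ht0).1 hx.1, hx.2.2.le⟩
  rwa [mu_inter_Ioo, muCdf_one, muCdf_iota ht0 ht1.le, sub_sub_cancel] at h

lemma Te_eq_abs {y : ℝ} {m : ℤ} (h₁ : 2 * m - 1 ≤ 1 / y) (h₂ : 1 / y < 2 * m + 1) :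
    Te y = |1 / y - 2 * m| := by
  have hm : ⌊(1 / y + 1) / 2⌋ = m := by
    rw [Int.floor_eq_iff]
    constructor <;> linarith
  rw [Te, hm]

lemma Te_mem_Icc (y : ℝ) : Te y ∈ Icc (0 : ℝ) 1 := by
  have h₁ := Int.floor_le ((1 / y + 1) / 2)
  have h₂ := Int.lt_floor_add_one ((1 / y + 1) / 2)
  exact ⟨abs_nonneg _, abs_le.2 ⟨by linarith, by linarith⟩⟩

lemma measurable_Te : Measurable Te := by
  unfold Te
  have hfloor : Measurable fun y : ℝ => (⌊(1 / y + 1) / 2⌋ : ℝ) :=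
    measurable_from_top.comp (Int.measurable_floor.comp (by fun_prop))
  fun_prop

lemma T_of_mem_Ioc {x : ℝ} (hx : x ∈ Ioc 0 (1 / 2)) : T x = Te x := by
  rw [T, if_neg (not_le.2 hx.1), if_neg (by linarith [hx.2]), if_pos hx.2]

lemma T_of_mem_Ioo {x : ℝ} (hx : x ∈ Ioo (1 / 2) 1) : T x = iota (Te (iota x)) := by
  rw [T, if_neg (by linarith [hx.1]), if_neg (not_le.2 hx.2), if_neg (not_le.2 hx.1)]

lemma T_mem_Icc (x : ℝ) : T x ∈ Icc (0 : ℝ) 1 := by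
  unfold T
  split_ifs
  · exact ⟨le_rfl, zero_le_one⟩
  · exact ⟨zero_le_one, le_rfl⟩
  · exact Te_mem_Icc x
  · exact iota_mem_Icc (Te_mem_Icc _)

lemma measurable_T : Measurable T := by
  unfold T
  exact Measurable.ite measurableSet_Iic measurable_const <|
    Measurable.ite measurableSet_Ici measurable_const <|
    Measurable.ite measurableSet_Iic measurable_Te <|
    measurable_iota.comp (measurable_Te.comp measurable_iota)

lemma mem_Ioc_one_div_iff {y a b : ℝ} (ha : 0 < a) (hb : 0 < b) :
    y ∈ Ioc (1 / b) (1 / a) ↔ 0 < y ∧ 1 / y ∈ Ico a b := by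
  constructor
  · rintro ⟨h₁, h₂⟩
    have hy : 0 < y := (one_div_pos.2 hb).trans h₁
    exact ⟨hy, (le_one_div ha hy).2 h₂, (one_div_lt hy hb).2 h₁⟩
  · rintro ⟨hy, h₁, h₂⟩
    exact ⟨(one_div_lt hy hb).1 h₂, (le_one_div ha hy).1 h₁⟩

lemma abs_one_div_sub_le_iff {y c r : ℝ} (hy : 0 < y) (hr : 0 ≤ r) (hcr : 0 < c - r) :
    |1 / y - c| ≤ r ↔ y ∈ Icc (1 / (c + r)) (1 / (c - r)) := by
  rw [abs_sub_le_iff, mem_Icc, one_div_le (by linarith) hy, le_one_div hy hcr]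
  constructor <;> rintro ⟨h₁, h₂⟩ <;> constructor <;> linarith

lemma abs_one_div_sub_lt_iff {y c r : ℝ} (hy : 0 < y) (hr : 0 ≤ r) (hcr : 0 < c - r) :
    |1 / y - c| < r ↔ y ∈ Ioo (1 / (c + r)) (1 / (c - r)) := by
  rw [abs_sub_lt_iff, mem_Ioo, one_div_lt (by linarith) hy, lt_one_div hy hcr]
  constructor <;> rintro ⟨h₁, h₂⟩ <;> constructor <;> linarith

lemma hasSum_sub_succ {φ : ℕ → ℝ} (hnonneg : ∀ k, 0 ≤ φ k - φ (k + 1))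
    (hφ : Tendsto φ atTop (𝓝 0)) : HasSum (fun k => φ k - φ (k + 1)) (φ 0) := by
  rw [hasSum_iff_tendsto_nat_of_nonneg hnonneg]
  simp_rw [Finset.sum_range_sub']
  simpa using tendsto_const_nhds.sub hφ

/-- `logGap r 2` is the `mu`-mass of `{y ∈ (0, 1/3] | Te y ≤ r}` (`mu_inter_Ioc_zero_third`). -/
noncomputable def logGap (r u : ℝ) : ℝ :=
  (log (u + r + √3) - log (u - r + √3)) / log (2 + √3)

lemma logGap_zero_left (u : ℝ) : logGap 0 u = 0 := by simp [logGap]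

lemma logGap_le_logGap {r r' u : ℝ} (hr : 0 ≤ r) (hrr' : r ≤ r') (hr' : r' < u + √3) :
    logGap r u ≤ logGap r' u := by
  refine div_le_div_of_nonneg_right (sub_le_sub ?_ ?_) log_two_add_sqrt_three_pos.le
  · exact Real.log_le_log (by linarith) (by linarith)
  · exact Real.log_le_log (by linarith) (by linarith)

lemma tendsto_logGap (r : ℝ) : Tendsto (logGap r) atTop (𝓝 0) := by
  have h := ((tendsto_log_comp_add_sub_log (r + √3)).sub
    (tendsto_log_comp_add_sub_log (-r + √3))).div_const (log (2 + √3))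
  rw [sub_zero, zero_div] at h
  refine h.congr fun u => ?_
  simp only [logGap, add_assoc, sub_add]
  ring_nf

lemma muCdf_one_div_sub_muCdf_one_div {r u : ℝ} (hr0 : 0 ≤ r) (hr1 : r ≤ 1) (hu : 0 ≤ u) :
    muCdf (1 / (u + 2 - r)) - muCdf (1 / (u + 2 + r)) = logGap r u - logGap r (u + 2) := by
  rw [muCdf_one_div (by linarith), muCdf_one_div (by linarith), logGap, logGap]
  ring_nf

noncomputable def evenCell (k : ℕ) : Set ℝ := Ioc (1 / (2 * k + 5)) (1 / (2 * k + 3))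

lemma iUnion_evenCell : ⋃ k, evenCell k = Ioc 0 (1 / 3) := by
  refine subset_antisymm (iUnion_subset fun k y hy => ⟨?_, hy.2.trans ?_⟩) fun y hy => ?_
  · exact (one_div_pos.2 (by positivity)).trans hy.1
  · gcongr; linarith [k.cast_nonneg (α := ℝ)]
  · have hv : 3 ≤ 1 / y := (le_one_div (by norm_num) hy.1).2 hy.2
    set k := ⌊(1 / y - 3) / 2⌋₊
    have h₁ : (k : ℝ) ≤ (1 / y - 3) / 2 := Nat.floor_le (by linarith)
    have h₂ : (1 / y - 3) / 2 < k + 1 := Nat.lt_floor_add_one _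
    refine mem_iUnion.2 ⟨k, (mem_Ioc_one_div_iff (by positivity) (by positivity)).2
      ⟨hy.1, by linarith, by linarith⟩⟩

lemma pairwise_disjoint_evenCell : Pairwise (Function.onFun Disjoint evenCell) := by
  have h : Antitone fun k : ℕ => 1 / (2 * (k : ℝ) + 3) := fun a b hab => by
    simp only; gcongr
  convert h.pairwise_disjoint_on_Ioc_succ using 3 with k
  simp only [evenCell, Order.succ_eq_add_one, Nat.cast_add, Nat.cast_one]
  ring_nf

lemma Te_eq_of_mem_evenCell {y : ℝ} {k : ℕ} (hy : y ∈ evenCell k) :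
    Te y = |1 / y - (2 * k + 4)| := by
  obtain ⟨-, h₁, h₂⟩ := (mem_Ioc_one_div_iff (by positivity) (by positivity)).1 hy
  rw [Te_eq_abs (m := k + 2) (by push_cast; linarith) (by push_cast; linarith)]
  push_cast; ring_nf

lemma mu_inter_evenCell {S : Set ℝ} {r : ℝ} (hr0 : 0 ≤ r) (hr1 : r ≤ 1)
    (hlt : {y | Te y < r} ⊆ S) (hle : S ⊆ {y | Te y ≤ r}) (k : ℕ) :
    mu (S ∩ evenCell k) =
      ENNReal.ofReal (muCdf (1 / (2 * k + 4 - r)) - muCdf (1 / (2 * k + 4 + r))) := by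
  have hk := k.cast_nonneg (α := ℝ)
  refine mu_eq_of_Ioo_subset_of_subset_Icc (by positivity) (by gcongr <;> linarith)
    ((div_le_one (by linarith)).2 (by linarith)) (fun y hy => ?_) fun y hy => ?_
  · have hy0 : 0 < y := (one_div_pos.2 (by linarith)).trans hy.1
    have hv := (abs_one_div_sub_lt_iff hy0 hr0 (by linarith)).2 hy
    have hcell : y ∈ evenCell k := (mem_Ioc_one_div_iff (by positivity) (by positivity)).2
      ⟨hy0, by linarith [(abs_lt.1 hv).1], by linarith [(abs_lt.1 hv).2]⟩
    exact ⟨hlt (show Te y < r by rw [Te_eq_of_mem_evenCell hcell]; exact hv), hcell⟩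
  · have hy0 : 0 < y := (one_div_pos.2 (by positivity)).trans hy.2.1
    exact (abs_one_div_sub_le_iff hy0 hr0 (by linarith)).1 (Te_eq_of_mem_evenCell hy.2 ▸ hle hy.1)

lemma mu_inter_Ioc_zero_third {S : Set ℝ} {r : ℝ} (hr0 : 0 ≤ r) (hr1 : r ≤ 1)
    (hlt : {y | Te y < r} ⊆ S) (hle : S ⊆ {y | Te y ≤ r}) (hS : MeasurableSet S) :
    mu (S ∩ Ioc 0 (1 / 3)) = ENNReal.ofReal (logGap r 2) := by
  have hnonneg : ∀ k : ℕ, 0 ≤ muCdf (1 / (2 * k + 4 - r)) - muCdf (1 / (2 * k + 4 + r)) :=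
    fun k => sub_nonneg.2 (muCdf_le_muCdf (by positivity) (by gcongr <;> linarith)
      ((div_le_one (by linarith)).2 (by linarith)))
  have hsum : HasSum (fun k : ℕ => muCdf (1 / (2 * k + 4 - r)) - muCdf (1 / (2 * k + 4 + r)))
      (logGap r 2) := by
    have htel (k : ℕ) : muCdf (1 / (2 * k + 4 - r)) - muCdf (1 / (2 * k + 4 + r)) =
        logGap r (2 * k + 2) - logGap r (2 * (k + 1 : ℕ) + 2) := by
      rw [show (2 : ℝ) * k + 4 = 2 * k + 2 + 2 by ring,
        muCdf_one_div_sub_muCdf_one_div hr0 hr1 (by positivity)]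
      push_cast; ring_nf
    simp_rw [htel] at hnonneg ⊢
    simpa using hasSum_sub_succ hnonneg ((tendsto_logGap r).comp
      (tendsto_atTop_add_const_right _ _ (tendsto_natCast_atTop_atTop.const_mul_atTop two_pos)))
  rw [← iUnion_evenCell, inter_iUnion, measure_iUnion
      (fun i j hij => (pairwise_disjoint_evenCell hij).mono inter_subset_right inter_subset_right)
      fun k => hS.inter measurableSet_Ioc,
    tsum_congr (mu_inter_evenCell hr0 hr1 hlt hle), ← ENNReal.ofReal_tsum_of_nonneg hnonneg
      hsum.summable, hsum.tsum_eq]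

lemma mu_Te_le_inter_Ioc_third_half {t : ℝ} (ht0 : 0 ≤ t) (ht1 : t < 1) :
    mu ({y | Te y ≤ t} ∩ Ioc (1 / 3) (1 / 2)) =
      ENNReal.ofReal (muCdf (1 / 2) - muCdf (1 / (2 + t))) := by
  have hTe {y : ℝ} (hy : y ∈ Ioc (1 / 3) (1 / 2)) : 0 < y ∧ Te y = |1 / y - 2| := by
    obtain ⟨hy, h₁, h₂⟩ := (mem_Ioc_one_div_iff (by norm_num) (by norm_num)).1 hy
    exact ⟨hy, by
      simpa using Te_eq_abs (m := 1) (by push_cast; linarith) (by push_cast; linarith)⟩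
  refine mu_eq_of_Ioo_subset_of_subset_Icc (by positivity) (by gcongr; linarith) (by norm_num)
    (fun y hy => ?_) fun y hy => ?_
  · have hy0 : 0 < y := (one_div_pos.2 (by linarith)).trans hy.1
    have hmid : y ∈ Ioc (1 / 3) (1 / 2) :=
      ⟨lt_of_le_of_lt (by gcongr; linarith) hy.1, hy.2.le⟩
    have hv := (abs_one_div_sub_lt_iff hy0 ht0 (by linarith)).2
      ⟨hy.1, hy.2.trans_le (one_div_le_one_div_of_le (by linarith) (by linarith))⟩
    exact ⟨show Te y ≤ t by rw [(hTe hmid).2]; exact hv.le, hmid⟩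
  · obtain ⟨hy0, hT⟩ := hTe hy.2
    exact ⟨((abs_one_div_sub_le_iff hy0 ht0 (by linarith)).1 (hT ▸ hy.1)).1, hy.2.2⟩

lemma mu_le_Te_inter_Ioo_zero_third {s : ℝ} (hs0 : 0 ≤ s) (hs1 : s ≤ 1) :
    mu ({y | s ≤ Te y} ∩ Ioo 0 (1 / 3)) = ENNReal.ofReal (logGap 1 2 - logGap s 2) := by
  have hmeas : MeasurableSet ({y | Te y < s} ∩ Ioc 0 (1 / 3)) :=
    (measurableSet_lt measurable_Te measurable_const).inter measurableSet_Ioc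
  have hall : mu (Ioc 0 (1 / 3)) = ENNReal.ofReal (logGap 1 2) := by
    simpa using mu_inter_Ioc_zero_third zero_le_one le_rfl (subset_univ _)
      (fun y _ => (Te_mem_Icc y).2) MeasurableSet.univ
  have hlt : mu ({y | Te y < s} ∩ Ioc 0 (1 / 3)) = ENNReal.ofReal (logGap s 2) :=
    mu_inter_Ioc_zero_third hs0 hs1 subset_rfl (fun y hy => (show Te y < s from hy).le)
      (measurableSet_lt measurable_Te measurable_const)
  have hset : {y | s ≤ Te y} ∩ Ioc 0 (1 / 3) =
      Ioc 0 (1 / 3) \ ({y | Te y < s} ∩ Ioc 0 (1 / 3)) := by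
    ext y
    simp [not_lt, and_comm]
  rw [measure_congr ((ae_eq_refl _).inter Ioo_ae_eq_Ioc), hset,
    measure_sdiff inter_subset_right hmeas.nullMeasurableSet (measure_ne_top _ _), hall, hlt,
    ENNReal.ofReal_sub _ ((logGap_zero_left 2).symm.trans_le
      (logGap_le_logGap le_rfl hs0 (by linarith [one_lt_sqrt_three])))]

lemma muCdf_eq_sum_of_pieces {t : ℝ} (ht0 : 0 ≤ t) (ht1 : t < 1) :
    logGap t 2 + (muCdf (1 / 2) - muCdf (1 / (2 + t))) + (logGap 1 2 - logGap (iota t) 2) =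
      muCdf t := by
  have hσ := one_lt_sqrt_three
  have hs := Real.sq_sqrt (show (0 : ℝ) ≤ 3 by norm_num)
  have h1t : 0 < 1 + t := by linarith
  have e₁ : log (2 + 1 + √3) = log √3 + log (1 + √3) := by
    rw [← Real.log_mul (by positivity) (by positivity)]
    congr 1; linear_combination -hs
  have e₂ :
      log (2 + (1 - t) / (1 + t) + √3) = log (1 + √3) + log (t + √3) - log (1 + t) := by
    rw [← Real.log_mul (by positivity) (by positivity), ← Real.log_div (by positivity) h1t.ne']
    congr 1; field_simp; linear_combination -hs
  have e₃ :
      log (2 - (1 - t) / (1 + t) + √3) = log (1 + √3) + log (1 + √3 * t) - log (1 + t) := by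
    rw [← Real.log_mul (by positivity) (by positivity), ← Real.log_div (by positivity) h1t.ne']
    congr 1; field_simp; linear_combination -t * hs
  have e₄ : log (1 - (2 - √3) * t) = log (2 - t + √3) - log (2 + √3) := by
    rw [← Real.log_div (by linarith) (by positivity)]
    congr 1; field_simp; linear_combination t * hs
  rw [muCdf_one_div (by norm_num), muCdf_one_div (by linarith), logGap, logGap, logGap, muCdf,
    iota, e₁, e₂, e₃, e₄, show (2 : ℝ) - 2 + √3 = √3 by ring,
    show 2 + t - 2 + √3 = t + √3 by ring, show (2 : ℝ) - 1 + √3 = 1 + √3 by ring]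
  field_simp
  ring

lemma preimage_T_Iic_inter_Ioc (t : ℝ) :
    T ⁻¹' Iic t ∩ Ioc 0 (1 / 2) = {y | Te y ≤ t} ∩ Ioc 0 (1 / 2) := by
  ext x
  exact and_congr_left fun hx => by rw [mem_preimage, mem_Iic, T_of_mem_Ioc hx]; rfl

lemma preimage_T_Iic_inter_Ioo {t : ℝ} (ht : 0 ≤ t) :
    T ⁻¹' Iic t ∩ Ioo (1 / 2) 1 =
      iota ⁻¹' ({y | iota t ≤ Te y} ∩ Ioo 0 (1 / 3)) ∩ Ioo 0 1 := by
  ext x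
  simp only [mem_inter_iff, mem_preimage, mem_Iic]
  constructor
  · rintro ⟨hT, hx⟩
    have hx0 : 0 < x := by linarith [hx.1]
    rw [T_of_mem_Ioo hx, iota_le_iff (Te_mem_Icc _).1 ht] at hT
    exact ⟨⟨hT, (iota_mem_Ioo_zero_third_iff hx0).2 hx⟩, hx0, hx.2⟩
  · rintro ⟨⟨hT, hι⟩, hx⟩
    have hx' := (iota_mem_Ioo_zero_third_iff hx.1).1 hι
    rw [T_of_mem_Ioo hx', iota_le_iff (Te_mem_Icc _).1 ht]
    exact ⟨hT, hx'⟩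

lemma mu_preimage_T_Iic_eq_add {t : ℝ} (ht : 0 ≤ t) :
    mu (T ⁻¹' Iic t) =
      mu ({y | Te y ≤ t} ∩ Ioc 0 (1 / 3)) + mu ({y | Te y ≤ t} ∩ Ioc (1 / 3) (1 / 2)) +
        mu ({y | iota t ≤ Te y} ∩ Ioo 0 (1 / 3)) := by
  have hTe : MeasurableSet {y | Te y ≤ t} := measurableSet_le measurable_Te measurable_const
  rw [← mu_inter_Ioo, ← Ioc_union_Ioo_eq_Ioo (b := 1 / 2) (by norm_num) (by norm_num),
    inter_union_distrib_left, measure_union ((Ioc_disjoint_Ioi_same.mono_right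
      Ioo_subset_Ioi_self).mono inter_subset_right inter_subset_right)
      ((measurable_T measurableSet_Iic).inter measurableSet_Ioo),
    preimage_T_Iic_inter_Ioc, ← Ioc_union_Ioc_eq_Ioc (b := 1 / 3) (by norm_num) (by norm_num),
    inter_union_distrib_left, measure_union ((Ioc_disjoint_Ioc_of_le le_rfl).mono
      inter_subset_right inter_subset_right) (hTe.inter measurableSet_Ioc),
    preimage_T_Iic_inter_Ioo ht, mu_inter_Ioo, measurePreserving_iota.measure_preimage
      ((measurableSet_le measurable_const measurable_Te).inter measurableSet_Ioo).nullMeasurableSet]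

lemma mu_preimage_T_Iic {t : ℝ} (ht0 : 0 ≤ t) (ht1 : t < 1) :
    mu (T ⁻¹' Iic t) = ENNReal.ofReal (muCdf t) := by
  have hι := iota_mem_Icc ⟨ht0, ht1.le⟩
  have hσ := one_lt_sqrt_three
  have heven : 0 ≤ logGap t 2 := logGap_zero_left 2 ▸ logGap_le_logGap le_rfl ht0 (by linarith)
  have hmid : 0 ≤ muCdf (1 / 2) - muCdf (1 / (2 + t)) :=
    sub_nonneg.2 (muCdf_le_muCdf (by positivity) (by gcongr; linarith) (by norm_num))
  have hodd : 0 ≤ logGap 1 2 - logGap (iota t) 2 :=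
    sub_nonneg.2 (logGap_le_logGap hι.1 hι.2 (by linarith))
  rw [mu_preimage_T_Iic_eq_add ht0, mu_inter_Ioc_zero_third (S := {y | Te y ≤ t}) ht0 ht1.le
      (fun y hy => (show Te y < t from hy).le) subset_rfl
      (measurableSet_le measurable_Te measurable_const),
    mu_Te_le_inter_Ioc_third_half ht0 ht1, mu_le_Te_inter_Ioo_zero_third hι.1 hι.2,
    ← ENNReal.ofReal_add heven hmid, ← ENNReal.ofReal_add (add_nonneg heven hmid) hodd,
    muCdf_eq_sum_of_pieces ht0 ht1]

lemma measurePreserving_T : MeasurePreserving T mu mu :=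
  ⟨measurable_T, map_eq_mu measurable_T (fun x _ => T_mem_Icc x) fun _ ht0 ht1 =>
    mu_preimage_T_Iic ht0 ht1⟩

/-- μ is a probability measure invariant under the SCF map T. -/
theorem mu_isProbability_and_T_invariant :
    IsProbabilityMeasure mu ∧
      ∀ E : Set ℝ, MeasurableSet E → E ⊆ Set.Icc (0 : ℝ) 1 →
        mu (T ⁻¹' E) = mu E :=
  ⟨inferInstance, fun _ hE _ => measurePreserving_T.measure_preimage hE.nullMeasurableSet⟩

end SCF
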